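/- If $N$ is a Poisson random variable with integer mean $n \geq 1$, then $\Pr[N \geq n] \geq 1/2$ and $\Pr[N \leq n] \geq 1/2$. -/

import Mathlib

open ProbabilityTheory Real Set Finset MeasureTheory

section aux

-- key scalar lemma
lemma key (x : ℝ) (hx : 0 ≤ x) : (1 - x) * exp x ≤ (1 + x) * exp (-x) := by
  set h : ℝ → ℝ := fun x => (1 + x) * exp (-x) - (1 - x) * exp x with hh
  have hd : ∀ y : ℝ, HasDerivAt h (y * exp y - y * exp (-y)) y := by
    intro y
    have h1 : HasDerivAt (fun y : ℝ => (1 + y) * exp (-y))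
        (1 * exp (-y) + (1 + y) * (exp (-y) * (-1))) y := by
      exact (((hasDerivAt_id y).const_add 1)).mul (((hasDerivAt_id y).neg).exp)
    have h2 : HasDerivAt (fun y : ℝ => (1 - y) * exp y)
        ((-1) * exp y + (1 - y) * exp y) y := by
      exact (((hasDerivAt_id y).const_sub 1)).mul (Real.hasDerivAt_exp y)
    have := h1.sub h2
    exact this.congr_deriv (by ring)
  have hmono : Monotone h := by
    apply monotone_of_deriv_nonneg
    · exact fun y => (hd y).differentiableAt
    · intro y
      rw [(hd y).deriv]
      rcases le_or_gt 0 y with hy | hy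
      · have : exp (-y) ≤ exp y := exp_le_exp.2 (by linarith)
        nlinarith
      · have : exp y ≤ exp (-y) := exp_le_exp.2 (by linarith)
        nlinarith
  have h0 : h 0 = 0 := by simp [hh]
  have := hmono hx
  rw [h0] at this
  simp only [hh] at this
  linarith


lemma pw (n : ℕ) (hn : 1 ≤ n) (s : ℝ) (h0 : 0 ≤ s) (h1 : s ≤ n) :
    (n - s) ^ n * exp (-(n - s)) ≤ (n + s) ^ n * exp (-(n + s)) := by
  have hnpos : (0:ℝ) < n := by exact_mod_cast hn
  set x := s / n with hx
  have hx0 : 0 ≤ x := div_nonneg h0 hnpos.le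
  have hx1 : x ≤ 1 := (div_le_one hnpos).2 h1
  have hk := key x hx0
  have hL0 : 0 ≤ (1 - x) * exp x := mul_nonneg (by linarith) (exp_pos _).le
  have hpow : ((1 - x) * exp x) ^ n ≤ ((1 + x) * exp (-x)) ^ n :=
    pow_le_pow_left₀ hL0 hk n
  have hnx : (n : ℝ) * x = s := by rw [hx]; field_simp
  have e1 : ((1 - x) * exp x) ^ n = (1 - x) ^ n * exp s := by
    rw [mul_pow, ← exp_nat_mul, hnx]
  have e2 : ((1 + x) * exp (-x)) ^ n = (1 + x) ^ n * exp (-s) := by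
    rw [mul_pow, ← exp_nat_mul]
    congr 2
    rw [mul_neg, hnx]
  rw [e1, e2] at hpow
  have hmul := mul_le_mul_of_nonneg_left hpow
    (mul_nonneg (pow_nonneg hnpos.le n) (exp_pos (-(n:ℝ))).le)
  have g1 : (n - s) ^ n * exp (-(n - s))
      = ((n:ℝ) ^ n * exp (-(n:ℝ))) * ((1 - x) ^ n * exp s) := by
    have hns : (n:ℝ) - s = n * (1 - x) := by rw [hx]; field_simp
    rw [hns, mul_pow, show -((n:ℝ) * (1 - x)) = -n + n * x by ring, hnx, Real.exp_add]
    ring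
  have g2 : ((n:ℝ) + s) ^ n * exp (-(n + s))
      = ((n:ℝ) ^ n * exp (-(n:ℝ))) * ((1 + x) ^ n * exp (-s)) := by
    have hns : (n:ℝ) + s = n * (1 + x) := by rw [hx]; field_simp
    rw [hns, mul_pow, show -((n:ℝ) * (1 + x)) = -n + -(n * x) by ring, hnx, Real.exp_add]
    ring
  rw [g1, g2]
  exact hmul

-- nat lemma: (n+i)! ≤ n^(2i+1) * (n-1-i)!  for i < n
lemma natfact (n : ℕ) (i : ℕ) (hi : i < n) :
    (n + i).factorial ≤ n ^ (2 * i + 1) * (n - 1 - i).factorial := by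
  induction i with
  | zero =>
    have h1 : 1 ≤ n := hi
    have : n.factorial = n * (n - 1).factorial := by
      conv_lhs => rw [← Nat.succ_pred_eq_of_pos h1]
      rw [Nat.factorial_succ, Nat.pred_eq_sub_one, Nat.sub_add_cancel h1]
    simp [this]
  | succ i ih =>
    have hi' : i < n := Nat.lt_of_succ_lt hi
    have ih' := ih hi'
    have hsub : n - 1 - i = (n - 1 - (i+1)) + 1 := by omega
    have hfac : (n - 1 - i).factorial = (n - 1 - i) * (n - 1 - (i+1)).factorial := by
      rw [hsub, Nat.factorial_succ, ← hsub]
    calc (n + (i+1)).factorial = (n + i + 1) * (n + i).factorial := by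
          rw [← Nat.factorial_succ]; ring_nf
      _ ≤ (n + i + 1) * (n ^ (2*i+1) * (n - 1 - i).factorial) :=
          Nat.mul_le_mul_left _ ih'
      _ = (n ^ (2*i+1)) * ((n + i + 1) * (n - 1 - i)) * (n - 1 - (i+1)).factorial := by
          rw [hfac]; ring
      _ ≤ (n ^ (2*i+1)) * (n * n) * (n - 1 - (i+1)).factorial := by
          have : (n + i + 1) * (n - 1 - i) ≤ n * n := by
            have h2 : n - 1 - i = n - (i+1) := by omega
            rw [h2]
            have := Nat.succ_le_of_lt hi
            nlinarith [Nat.sub_le n (i+1), Nat.sub_add_cancel (le_of_lt hi)]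
          exact Nat.mul_le_mul_right _ (Nat.mul_le_mul_left _ this)
      _ = n ^ (2*(i+1)+1) * (n - 1 - (i+1)).factorial := by ring

lemma ftc (m : ℕ) (lam : ℝ) :
    ∫ x in (0:ℝ)..lam, x ^ m * exp (-x)
      = m.factorial - exp (-lam) * ∑ k ∈ range (m+1), ((m.factorial : ℝ) / k.factorial) * lam ^ k := by
  set c : ℕ → ℝ := fun k => (m.factorial : ℝ) / k.factorial with hc
  set F : ℝ → ℝ := fun x => -(exp (-x) * ∑ k ∈ range (m+1), c k * x ^ k) with hF
  have hderiv : ∀ x : ℝ, HasDerivAt F (x ^ m * exp (-x)) x := by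
    intro x
    have hP : HasDerivAt (fun x : ℝ => ∑ k ∈ range (m+1), c k * x ^ k)
        (∑ k ∈ range (m+1), c k * (k * x ^ (k-1))) x := by
      apply HasDerivAt.fun_sum
      intro k _
      exact (hasDerivAt_pow k x).const_mul (c k)
    have hexp : HasDerivAt (fun x : ℝ => exp (-x)) (exp (-x) * (-1)) x :=
      ((hasDerivAt_id x).neg).exp
    have hmul := (hexp.mul hP).neg
    refine hmul.congr_deriv ?_
    have hsum : ∑ k ∈ range (m+1), c k * (k * x ^ (k-1))
        = ∑ k ∈ range m, c k * x ^ k := by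
      rw [Finset.sum_range_succ']
      simp only [Nat.cast_zero, zero_mul, mul_zero, add_zero]
      apply Finset.sum_congr rfl
      intro k _
      have : c (k+1) * ((k+1) : ℕ) = c k := by
        simp only [hc, Nat.factorial_succ]
        push_cast
        field_simp
      calc c (k+1) * (((k:ℕ)+1 : ℕ) * x ^ (k+1-1)) = (c (k+1) * ((k+1):ℕ)) * x ^ k := by
            push_cast; ring
        _ = c k * x ^ k := by rw [this]
    rw [hsum]
    have hlast : ∑ k ∈ range (m+1), c k * x ^ k
        = (∑ k ∈ range m, c k * x ^ k) + c m * x ^ m := Finset.sum_range_succ _ _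
    have hcm : c m = 1 := by
      simp only [hc]
      rw [div_self]
      exact_mod_cast Nat.factorial_ne_zero m
    rw [hlast, hcm]
    ring
  have hcont : Continuous fun x : ℝ => x ^ m * exp (-x) := by continuity
  have := intervalIntegral.integral_eq_sub_of_hasDerivAt
    (fun x _ => hderiv x) (hcont.intervalIntegrable 0 lam)
  rw [this]
  have hF0 : F 0 = -(m.factorial : ℝ) := by
    simp only [hF]
    rw [Finset.sum_eq_single 0]
    · simp [hc]
    · intro k _ hk
      simp [zero_pow hk]
    · simp
  rw [hF0]
  simp only [hF]
  ring


lemma intbound (n : ℕ) (hn : 1 ≤ n) :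
    ∫ x in (0:ℝ)..n, x ^ n * exp (-x) ≤ (n.factorial : ℝ) / 2 := by
  set f : ℝ → ℝ := fun x => x ^ n * exp (-x) with hf
  have hfc : Continuous f := by continuity
  have hn0 : (0:ℝ) ≤ (n:ℝ) := by positivity
  have hcongr : EqOn (fun x => exp (-x) * x ^ (((n:ℝ) + 1) - 1)) f (Ioi (0:ℝ)) := by
    intro x _
    simp only
    rw [show ((n:ℝ) + 1) - 1 = (n:ℝ) by ring, Real.rpow_natCast, hf]
    ring
  -- integrability on Ioi 0
  have hInt : MeasureTheory.IntegrableOn f (Ioi (0:ℝ)) := by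
    have := Real.GammaIntegral_convergent (s := (n:ℝ)+1) (by positivity)
    exact this.congr_fun hcongr measurableSet_Ioi
  -- Gamma value
  have hGamma : ∫ x in Ioi (0:ℝ), f x = n.factorial := by
    have h1 : Real.Gamma ((n:ℝ) + 1) = ∫ x in Ioi (0:ℝ), exp (-x) * x ^ (((n:ℝ) + 1) - 1) :=
      Real.Gamma_eq_integral (by positivity)
    rw [← MeasureTheory.setIntegral_congr_fun measurableSet_Ioi hcongr, ← h1]
    exact_mod_cast Real.Gamma_nat_eq_factorial n
  -- ∫_0^{2n} f ≤ ∫_{Ioi 0} f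
  have hsplit : (∫ x in (0:ℝ)..(2*n:ℝ), f x) ≤ ∫ x in Ioi (0:ℝ), f x := by
    rw [intervalIntegral.integral_of_le (by linarith)]
    apply MeasureTheory.setIntegral_mono_set hInt
    · filter_upwards [MeasureTheory.ae_restrict_mem measurableSet_Ioi] with x hx
      simp only [Pi.zero_apply, hf]
      have hx' : (0:ℝ) < x := hx
      positivity
    · exact HasSubset.Subset.eventuallyLE Ioc_subset_Ioi_self
  have hadd : (∫ x in (0:ℝ)..(n:ℝ), f x) + (∫ x in (n:ℝ)..(2*n:ℝ), f x)
      = ∫ x in (0:ℝ)..(2*n:ℝ), f x :=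
    intervalIntegral.integral_add_adjacent_intervals
      (hfc.intervalIntegrable _ _) (hfc.intervalIntegrable _ _)
  have hcomp : (∫ x in (0:ℝ)..(n:ℝ), f x) ≤ ∫ x in (n:ℝ)..(2*n:ℝ), f x := by
    have e1 : (∫ x in (0:ℝ)..(n:ℝ), f ((n:ℝ) - x)) = ∫ x in (0:ℝ)..(n:ℝ), f x := by
      rw [intervalIntegral.integral_comp_sub_left f (n:ℝ)]
      norm_num
    have e2 : (∫ x in (0:ℝ)..(n:ℝ), f ((n:ℝ) + x)) = ∫ x in (n:ℝ)..(2*n:ℝ), f x := by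
      rw [intervalIntegral.integral_comp_add_left f (n:ℝ)]
      norm_num
      rw [show (n:ℝ) + n = 2 * n by ring]
    rw [← e1, ← e2]
    apply intervalIntegral.integral_mono_on hn0
      ((hfc.comp (by continuity)).intervalIntegrable _ _)
      ((hfc.comp (by continuity)).intervalIntegrable _ _)
    intro x hx
    exact pw n hn x hx.1 hx.2
  rw [hGamma] at hsplit
  linarith

end aux

/-- A Poisson random variable with integer mean `n ≥ 1` has median `n`: both tails
at the mean have probability at least `1/2`. -/
theorem stmt17 (n : ℕ) (hn : 1 ≤ n) :
    (1 / 2 : ℝ) ≤ (∑' k : ℕ, if n ≤ k then poissonPMFReal n k else 0) ∧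
    (1 / 2 : ℝ) ≤ (∑' k : ℕ, if k ≤ n then poissonPMFReal n k else 0) := by
  set p : ℕ → ℝ := fun k => poissonPMFReal n k with hp
  have hpk : ∀ k, p k = exp (-(n:ℝ)) * (n:ℝ) ^ k / (k.factorial : ℝ) := by
    intro k
    simp [hp, poissonPMFReal]
  have hp0 : ∀ k, 0 ≤ p k := fun k => poissonPMFReal_nonneg
  have hsum : HasSum p 1 := poissonPMFRealSum n
  set g : ℕ → ℝ := fun k => if n ≤ k then p k else 0 with hg
  set h : ℕ → ℝ := fun k => if k < n then p k else 0 with hhdef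
  set b : ℕ → ℝ := fun k => if k ≤ n then p k else 0 with hb
  have hg0 : ∀ k, 0 ≤ g k := by intro k; simp only [hg]; split <;> simp [hp0]
  have hh0 : ∀ k, 0 ≤ h k := by intro k; simp only [hhdef]; split <;> simp [hp0]
  have hb0 : ∀ k, 0 ≤ b k := by intro k; simp only [hb]; split <;> simp [hp0]
  have hgle : ∀ k, g k ≤ p k := by intro k; simp only [hg]; split <;> simp [hp0]
  have hhle : ∀ k, h k ≤ p k := by intro k; simp only [hhdef]; split <;> simp [hp0]
  have hble : ∀ k, b k ≤ p k := by intro k; simp only [hb]; split <;> simp [hp0]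
  have hgs : Summable g := Summable.of_nonneg_of_le hg0 hgle hsum.summable
  have hhs : Summable h := Summable.of_nonneg_of_le hh0 hhle hsum.summable
  have hbs : Summable b := Summable.of_nonneg_of_le hb0 hble hsum.summable
  -- h has finite support
  have hS : ∑' k, h k = ∑ k ∈ range n, p k := by
    rw [tsum_eq_sum (s := range n) (by
      intro k hk
      simp only [hhdef]
      rw [if_neg (by simpa using hk)])]
    apply Finset.sum_congr rfl
    intro k hk
    simp only [hhdef]
    rw [if_pos (by simpa using hk)]
  have hB : ∑' k, b k = ∑ k ∈ range (n+1), p k := by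
    rw [tsum_eq_sum (s := range (n+1)) (by
      intro k hk
      simp only [hb]
      rw [if_neg (by simp at hk; omega)])]
    apply Finset.sum_congr rfl
    intro k hk
    simp only [hb]
    rw [if_pos (by simp at hk; omega)]
  have htot : (∑' k, g k) + (∑' k, h k) = 1 := by
    rw [← Summable.tsum_add hgs hhs]
    rw [show (fun k => g k + h k) = p by
      funext k
      simp only [hg, hhdef]
      by_cases hc : n ≤ k
      · rw [if_pos hc, if_neg (by omega)]; ring
      · rw [if_neg hc, if_pos (by omega)]; ring]
    exact hsum.tsum_eq
  constructor
  · -- lower tail: S ≤ A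
    have hterm : ∀ i ∈ range n, p (n - 1 - i) ≤ p (n + i) := by
      intro i hi
      have hi' : i < n := by simpa using hi
      rw [hpk, hpk]
      have hnpos : (0:ℝ) < n := by exact_mod_cast hn
      rw [div_le_div_iff₀ (by positivity) (by positivity)]
      have hcast : ((n + i).factorial : ℝ) ≤ (n:ℝ) ^ (2*i+1) * ((n - 1 - i).factorial : ℝ) := by
        exact_mod_cast natfact n i hi'
      have hexp : (n:ℝ) ^ (n - 1 - i) * (n:ℝ) ^ (2*i+1) = (n:ℝ) ^ (n + i) := by
        rw [← pow_add]
        congr 1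
        omega
      calc exp (-(n:ℝ)) * (n:ℝ) ^ (n-1-i) * ((n+i).factorial : ℝ)
          ≤ exp (-(n:ℝ)) * (n:ℝ) ^ (n-1-i) * ((n:ℝ) ^ (2*i+1) * ((n-1-i).factorial : ℝ)) := by
            apply mul_le_mul_of_nonneg_left hcast (by positivity)
        _ = exp (-(n:ℝ)) * (n:ℝ) ^ (n+i) * ((n-1-i).factorial : ℝ) := by
            rw [← hexp]; ring
    have hrefl : ∑ k ∈ range n, p k = ∑ i ∈ range n, p (n - 1 - i) :=
      (Finset.sum_range_reflect (fun k => p k) n).symm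
    have hstep1 : ∑ k ∈ range n, p k ≤ ∑ i ∈ range n, p (n + i) := by
      rw [hrefl]
      exact Finset.sum_le_sum hterm
    have hstep2 : ∑ i ∈ range n, p (n + i) ≤ ∑' k, g k := by
      have e : ∑ k ∈ Finset.Ico n (2*n), g k = ∑ i ∈ range n, p (n + i) := by
        rw [Finset.sum_Ico_eq_sum_range]
        rw [show 2*n - n = n by omega]
        apply Finset.sum_congr rfl
        intro i _
        simp only [hg]
        rw [if_pos (by omega)]
      rw [← e]
      exact Summable.sum_le_tsum _ (fun k _ => hg0 k) hgs
    have : ∑' k, h k ≤ ∑' k, g k := by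
      rw [hS]; exact le_trans hstep1 hstep2
    linarith
  · -- upper tail via integral
    have hI := ftc n (n:ℝ)
    have hIb := intbound n hn
    have hfacpos : (0:ℝ) < (n.factorial : ℝ) := by exact_mod_cast n.factorial_pos
    have hBsum : ∑ k ∈ range (n+1), ((n.factorial : ℝ) / k.factorial) * (n:ℝ) ^ k
        = (n.factorial : ℝ) * ∑ k ∈ range (n+1), (n:ℝ) ^ k / (k.factorial : ℝ) := by
      rw [Finset.mul_sum]
      apply Finset.sum_congr rfl
      intro k _
      ring
    have hBval : ∑' k, b k = exp (-(n:ℝ)) * ∑ k ∈ range (n+1), (n:ℝ) ^ k / (k.factorial : ℝ) := by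
      rw [hB, Finset.mul_sum]
      apply Finset.sum_congr rfl
      intro k _
      rw [hpk]
      ring
    rw [hBsum] at hI
    rw [hBval]
    set T := exp (-(n:ℝ)) * ∑ k ∈ range (n+1), (n:ℝ) ^ k / (k.factorial : ℝ) with hT
    have : (n.factorial : ℝ) - (n.factorial : ℝ) * T ≤ (n.factorial : ℝ) / 2 := by
      rw [show (n.factorial : ℝ) - (n.factorial:ℝ) * T
          = (n.factorial : ℝ) - exp (-(n:ℝ)) * ((n.factorial : ℝ) * (∑ k ∈ range (n+1), (n:ℝ) ^ k / (k.factorial : ℝ))) by rw [hT]; ring]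
      rw [← hI]
      exact hIb
    nlinarith
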